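/- Let A be an n×n doubly stochastic matrix with a_{ii} > 0 for all i, whose off-diagonal positivity pattern is the edge set of a connected undirected graph on n vertices (i.e., a_{ij} > 0 for i ≠ j if and only if {i,j} is an edge). Then the second largest singular value σ₂ of A satisfies σ₂ < 1; equivalently, for every x ∈ ℝ^n orthogonal to the all-ones vector, ‖Ax‖₂ ≤ σ₂ ‖x‖₂ with σ₂ < 1. -/
import Mathlib


/-- The ℓ1 norm on `ℝ^n`. -/
def l1norm {n : ℕ} (x : Fin n → ℝ) : ℝ := ∑ i, |x i|

/-- The ℓ2 (Euclidean) norm on `ℝ^n`. -/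
noncomputable def l2norm {n : ℕ} (x : Fin n → ℝ) : ℝ := Real.sqrt (∑ i, (x i) ^ 2)

/-- The second largest singular value of a doubly stochastic matrix `A`, characterized
variationally as the maximal gain `‖A x‖₂` of `A` over unit ℓ2-norm vectors `x`
orthogonal to the all-ones vector (for a doubly stochastic matrix the all-ones vector is
a top singular vector with singular value `1`, so this sup is exactly `σ₂`). -/
noncomputable def sigma2 {n : ℕ} (A : Matrix (Fin n) (Fin n) ℝ) : ℝ :=
  sSup {s : ℝ | ∃ x : Fin n → ℝ, l2norm x = 1 ∧ (∑ i, x i) = 0 ∧ s = l2norm (A.mulVec x)}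

lemma walk_const_aux {n : ℕ} {G : SimpleGraph (Fin n)} {x : Fin n → ℝ}
    (h : ∀ i j, G.Adj i j → x i = x j) {i j : Fin n} (w : G.Walk i j) : x i = x j := by
  induction w with
  | nil => rfl
  | cons ha _ ih => exact (h _ _ ha).trans ih

lemma l2norm_smul {n : ℕ} (c : ℝ) (x : Fin n → ℝ) : l2norm (c • x) = |c| * l2norm x := by
  unfold l2norm
  rw [← Real.sqrt_sq_eq_abs, ← Real.sqrt_mul (sq_nonneg c), Finset.mul_sum]
  congr 1
  refine Finset.sum_congr rfl fun i _ => ?_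
  simp [Pi.smul_apply, smul_eq_mul]; ring

lemma l2norm_pos {n : ℕ} {y : Fin n → ℝ} (hy : y ≠ 0) : 0 < l2norm y := by
  apply Real.sqrt_pos.mpr
  rcases Function.ne_iff.mp hy with ⟨i, hi⟩
  have h2 : (y i) ^ 2 ≠ 0 := pow_ne_zero 2 hi
  exact Finset.sum_pos' (fun j _ => sq_nonneg _)
    ⟨i, Finset.mem_univ i, lt_of_le_of_ne (sq_nonneg _) (Ne.symm h2)⟩

/-- For a doubly stochastic matrix `A` with positive diagonal whose
off-diagonal positivity pattern is the edge set of a connected undirected graph, the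
second largest singular value `σ₂` of `A` satisfies `σ₂ < 1`; equivalently, for every
`x ∈ ℝⁿ` orthogonal to the all-ones vector, `‖Ax‖₂ ≤ σ₂ ‖x‖₂` with `σ₂ < 1`. -/
theorem doubly_stochastic_sigma2_lt_one
    {n : ℕ} (hn : 0 < n) (A : Matrix (Fin n) (Fin n) ℝ)
    (hA0 : ∀ i j, 0 ≤ A i j)
    (hArow : ∀ i, ∑ j, A i j = 1)
    (hAcol : ∀ j, ∑ i, A i j = 1)
    (hAdiag : ∀ i, 0 < A i i)
    (G : SimpleGraph (Fin n))
    (hGadj : ∀ i j, G.Adj i j ↔ (i ≠ j ∧ 0 < A i j))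
    (hGconn : G.Connected) :
    sigma2 A < 1 ∧
      ∀ y : Fin n → ℝ, (∑ i, y i) = 0 → l2norm (A.mulVec y) ≤ sigma2 A * l2norm y := by
  classical
  set S := {s : ℝ | ∃ x : Fin n → ℝ, l2norm x = 1 ∧ (∑ i, x i) = 0 ∧ s = l2norm (A.mulVec x)}
    with hSdef
  have hsig : sigma2 A = sSup S := rfl
  have hmv : ∀ (x : Fin n → ℝ) (i : Fin n), A.mulVec x i = ∑ j, A i j * x j := fun x i => by
    rw [Matrix.mulVec, dotProduct]
  -- key variance identity
  have key : ∀ x : Fin n → ℝ,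
      (∑ i, (A.mulVec x i) ^ 2) + (∑ i, ∑ j, A i j * (x j - A.mulVec x i) ^ 2)
        = ∑ j, (x j) ^ 2 := by
    intro x
    have hrowid : ∀ i, ∑ j, A i j * (x j - A.mulVec x i) ^ 2
        = (∑ j, A i j * (x j) ^ 2) - (A.mulVec x i) ^ 2 := by
      intro i
      have hexp : ∀ j ∈ Finset.univ, A i j * (x j - A.mulVec x i) ^ 2
          = A i j * (x j) ^ 2 - (2 * A.mulVec x i) * (A i j * x j)
            + (A.mulVec x i) ^ 2 * A i j := fun j _ => by ring
      rw [Finset.sum_congr rfl hexp, Finset.sum_add_distrib, Finset.sum_sub_distrib,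
        ← Finset.mul_sum, ← Finset.mul_sum, hArow i, ← hmv x i]
      ring
    rw [Finset.sum_congr rfl (fun i _ => hrowid i), Finset.sum_sub_distrib]
    have hsw : ∑ i, ∑ j, A i j * (x j) ^ 2 = ∑ j, (x j) ^ 2 := by
      rw [Finset.sum_comm]
      refine Finset.sum_congr rfl fun j _ => ?_
      rw [← Finset.sum_mul, hAcol j, one_mul]
    rw [hsw]; ring
  have hD0 : ∀ x : Fin n → ℝ, 0 ≤ ∑ i, ∑ j, A i j * (x j - A.mulVec x i) ^ 2 :=
    fun x => Finset.sum_nonneg fun i _ => Finset.sum_nonneg fun j _ =>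
      mul_nonneg (hA0 i j) (sq_nonneg _)
  have hle : ∀ x : Fin n → ℝ, l2norm (A.mulVec x) ≤ l2norm x := by
    intro x
    apply Real.sqrt_le_sqrt
    nlinarith [key x, hD0 x]
  -- strict inequality on the constraint set
  have hlt : ∀ x : Fin n → ℝ, l2norm x = 1 → (∑ i, x i) = 0 → l2norm (A.mulVec x) < 1 := by
    intro x hx1 hx0
    have hsum1 : ∑ j, (x j) ^ 2 = 1 := by
      have h := hx1
      unfold l2norm at h
      nlinarith [Real.sq_sqrt (Finset.sum_nonneg fun j (_ : j ∈ Finset.univ) => sq_nonneg (x j)),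
        Real.sqrt_nonneg (∑ j, (x j) ^ 2)]
    by_contra hcon
    push_neg at hcon
    have hA2 : 1 ≤ ∑ i, (A.mulVec x i) ^ 2 := by
      have hnn : 0 ≤ ∑ i, (A.mulVec x i) ^ 2 :=
        Finset.sum_nonneg fun i _ => sq_nonneg _
      have := Real.sq_sqrt hnn
      unfold l2norm at hcon
      nlinarith [Real.sqrt_nonneg (∑ i, (A.mulVec x i) ^ 2)]
    have hDzero : ∑ i, ∑ j, A i j * (x j - A.mulVec x i) ^ 2 = 0 := by
      have := key x
      have := hD0 x
      linarith
    have hterm : ∀ i j, A i j * (x j - A.mulVec x i) ^ 2 = 0 := by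
      intro i j
      have h1 := (Finset.sum_eq_zero_iff_of_nonneg
        (fun i _ => Finset.sum_nonneg fun j _ => mul_nonneg (hA0 i j) (sq_nonneg _))).mp hDzero
        i (Finset.mem_univ i)
      exact (Finset.sum_eq_zero_iff_of_nonneg
        (fun j _ => mul_nonneg (hA0 i j) (sq_nonneg _))).mp h1 j (Finset.mem_univ j)
    have hxm : ∀ i j, 0 < A i j → x j = A.mulVec x i := by
      intro i j hij
      have := hterm i j
      have h2 : (x j - A.mulVec x i) ^ 2 = 0 := by
        rcases mul_eq_zero.mp this with h | h
        · exact absurd h (ne_of_gt hij)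
        · exact h
      have := pow_eq_zero_iff (n := 2) (by norm_num) |>.mp h2
      linarith [sub_eq_zero.mp this]
    have hadj : ∀ i j, G.Adj i j → x i = x j := by
      intro i j hij
      have h1 := hxm i i (hAdiag i)
      have h2 := hxm i j ((hGadj i j).mp hij).2
      rw [h1, h2]
    have hconst : ∀ i j : Fin n, x i = x j := by
      intro i j
      exact (hGconn.preconnected i j).elim fun w => walk_const_aux hadj w
    have i0 : Fin n := ⟨0, hn⟩
    have hxval : ∀ i, x i = x i0 := fun i => hconst i i0
    have hsum : ∑ i, x i = (n : ℝ) * x i0 := by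
      rw [Finset.sum_congr rfl (fun i _ => hxval i), Finset.sum_const, Finset.card_univ,
        Fintype.card_fin, nsmul_eq_mul]
    have hx0' : x i0 = 0 := by
      have hne : (n : ℝ) ≠ 0 := Nat.cast_ne_zero.mpr hn.ne'
      have : (n : ℝ) * x i0 = 0 := by rw [← hsum]; exact hx0
      exact (mul_eq_zero.mp this).resolve_left hne
    have : ∑ j, (x j) ^ 2 = 0 := by
      apply Finset.sum_eq_zero
      intro j _
      rw [hxval j, hx0']; ring
    rw [this] at hsum1
    norm_num at hsum1
  -- mulVec of 0
  have hz : l2norm (A.mulVec (0 : Fin n → ℝ)) = 0 := by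
    rw [Matrix.mulVec_zero]
    unfold l2norm
    simp
  have hl2zero : l2norm (0 : Fin n → ℝ) = 0 := by unfold l2norm; simp
  set K := {x : Fin n → ℝ | l2norm x = 1 ∧ (∑ i, x i) = 0} with hKdef
  by_cases hK : K.Nonempty
  · -- compactness argument
    have hcontl2 : Continuous fun x : Fin n → ℝ => l2norm x := by
      unfold l2norm
      exact Real.continuous_sqrt.comp
        (continuous_finset_sum _ fun i _ => (continuous_apply i).pow 2)
    have hcontf : Continuous fun x : Fin n → ℝ => l2norm (A.mulVec x) := by
      unfold l2norm
      apply Real.continuous_sqrt.comp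
      apply continuous_finset_sum
      intro i _
      have hcomp : (fun x : Fin n → ℝ => A.mulVec x i) = fun x => ∑ j, A i j * x j :=
        funext fun x => hmv x i
      have hc2 : Continuous fun x : Fin n → ℝ => A.mulVec x i := by
        rw [hcomp]
        exact continuous_finset_sum _ fun j _ => continuous_const.mul (continuous_apply j)
      exact hc2.pow 2
    have hKclosed : IsClosed K := by
      have h1 : IsClosed {x : Fin n → ℝ | l2norm x = 1} :=
        isClosed_eq hcontl2 continuous_const
      have h2 : IsClosed {x : Fin n → ℝ | (∑ i, x i) = 0} :=
        isClosed_eq (continuous_finset_sum _ fun i _ => continuous_apply i) continuous_const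
      exact h1.inter h2
    have hKbdd : Bornology.IsBounded K := by
      apply (Metric.isBounded_closedBall (x := (0 : Fin n → ℝ)) (r := 1)).subset
      intro x hx
      rw [Metric.mem_closedBall, dist_zero_right]
      rw [pi_norm_le_iff_of_nonneg zero_le_one]
      intro i
      have h1 : (x i) ^ 2 ≤ ∑ j, (x j) ^ 2 :=
        Finset.single_le_sum (fun j _ => sq_nonneg (x j)) (Finset.mem_univ i)
      have h2 : Real.sqrt ((x i) ^ 2) ≤ Real.sqrt (∑ j, (x j) ^ 2) := Real.sqrt_le_sqrt h1
      rw [Real.sqrt_sq_eq_abs] at h2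
      calc ‖x i‖ = |x i| := rfl
        _ ≤ l2norm x := h2
        _ = 1 := hx.1
    have hKcpt : IsCompact K := Metric.isCompact_of_isClosed_isBounded hKclosed hKbdd
    obtain ⟨x₀, hx₀K, hmax⟩ := hKcpt.exists_isMaxOn hK hcontf.continuousOn
    have hx₀S : l2norm (A.mulVec x₀) ∈ S := ⟨x₀, hx₀K.1, hx₀K.2, rfl⟩
    have hub : ∀ s ∈ S, s ≤ l2norm (A.mulVec x₀) := by
      rintro s ⟨x, hx1, hx2, rfl⟩
      exact hmax ⟨hx1, hx2⟩
    have hbdd : BddAbove S := ⟨l2norm (A.mulVec x₀), hub⟩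
    have hsup_le : sSup S ≤ l2norm (A.mulVec x₀) := csSup_le ⟨_, hx₀S⟩ hub
    have hfx₀lt : l2norm (A.mulVec x₀) < 1 := hlt x₀ hx₀K.1 hx₀K.2
    constructor
    · rw [hsig]; exact lt_of_le_of_lt hsup_le hfx₀lt
    · intro y hy
      by_cases hy0 : y = 0
      · subst hy0
        rw [hz, hl2zero, mul_zero]
      · set c := l2norm y with hc
        have hcpos : 0 < c := l2norm_pos hy0
        set x := c⁻¹ • y with hx
        have hxnorm : l2norm x = 1 := by
          rw [hx, l2norm_smul, abs_of_pos (inv_pos.mpr hcpos), ← hc, inv_mul_cancel₀ hcpos.ne']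
        have hxsum : ∑ i, x i = 0 := by
          rw [hx]
          simp only [Pi.smul_apply, smul_eq_mul, ← Finset.mul_sum, hy, mul_zero]
        have hmem : l2norm (A.mulVec x) ∈ S := ⟨x, hxnorm, hxsum, rfl⟩
        have hfx_le : l2norm (A.mulVec x) ≤ sSup S := le_csSup hbdd hmem
        have hyx : y = c • x := by
          rw [hx, smul_smul, mul_inv_cancel₀ hcpos.ne', one_smul]
        have hAy : l2norm (A.mulVec y) = c * l2norm (A.mulVec x) := by
          rw [hyx, Matrix.mulVec_smul, l2norm_smul, abs_of_pos hcpos]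
        rw [hsig, hAy]
        calc c * l2norm (A.mulVec x) ≤ c * sSup S := by
              exact mul_le_mul_of_nonneg_left hfx_le hcpos.le
          _ = sSup S * c := mul_comm _ _
  · -- constraint set empty: only y = 0 satisfies the constraints
    have hSempty : S = ∅ := by
      rw [Set.eq_empty_iff_forall_notMem]
      rintro s ⟨x, hx1, hx2, _⟩
      exact hK ⟨x, hx1, hx2⟩
    have hsup0 : sSup S = 0 := by rw [hSempty]; exact Real.sSup_empty
    constructor
    · rw [hsig, hsup0]; norm_num
    · intro y hy
      by_cases hy0 : y = 0
      · subst hy0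
        rw [hz, hl2zero, mul_zero]
      · exfalso
        apply hK
        set c := l2norm y with hc
        have hcpos : 0 < c := l2norm_pos hy0
        refine ⟨c⁻¹ • y, ?_, ?_⟩
        · rw [l2norm_smul, abs_of_pos (inv_pos.mpr hcpos), ← hc, inv_mul_cancel₀ hcpos.ne']
        · simp only [Pi.smul_apply, smul_eq_mul, ← Finset.mul_sum, hy, mul_zero]
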